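/- Let F be a ℝ^K-valued random vector with S := E(FFᵀ) positive definite and μ := E(F). For fixed ζ ∈ ℝ^K, the infimum over K×K real matrices Γ of E‖ΓF + ζ‖₂² equals ‖ζ‖₂² (1 − μᵀ S⁻¹ μ), attained at Γ whose i-th row Γᵢ satisfies S Γᵢᵀ = −ζᵢ μ. -/

import Mathlib

/-!
Writing `Γᵢ` for the rows of `Γ`, the risk splits as `∑ᵢ E (Γᵢ ⬝ F + ζᵢ)²`, and each summand is
the quadratic `Γᵢᵀ S Γᵢ + 2 ζᵢ Γᵢᵀ μ + ζᵢ²` in the second moments of `F`. Completing the square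
with `u = S⁻¹ μ` rewrites it as `(Γᵢ + ζᵢ u)ᵀ S (Γᵢ + ζᵢ u) + ζᵢ² (1 - μᵀ S⁻¹ μ)`; positive
definiteness of `S` makes the first term nonnegative, vanishing exactly when `S Γᵢ = -ζᵢ μ`.
-/

open Matrix MeasureTheory

namespace Matrix

variable {n R : Type*} [Fintype n] [DecidableEq n] [CommRing R]

theorem mulVec_nonsing_inv_mulVec {S : Matrix n n R} (hdet : IsUnit S.det) (v : n → R) :
    S *ᵥ (S⁻¹ *ᵥ v) = v := by
  rw [mulVec_mulVec, mul_nonsing_inv S hdet, one_mulVec]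

theorem IsSymm.quadratic_eq_add_sq_mul {S : Matrix n n R} (hS : S.IsSymm) (hdet : IsUnit S.det)
    (μ γ : n → R) (c : R) :
    γ ⬝ᵥ (S *ᵥ γ) + 2 * c * (γ ⬝ᵥ μ) + c ^ 2 =
      (γ + c • S⁻¹ *ᵥ μ) ⬝ᵥ (S *ᵥ (γ + c • S⁻¹ *ᵥ μ)) + c ^ 2 * (1 - μ ⬝ᵥ (S⁻¹ *ᵥ μ)) := by
  have hsymm : (S⁻¹ *ᵥ μ) ⬝ᵥ (S *ᵥ γ) = γ ⬝ᵥ μ := by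
    rw [dotProduct_mulVec, ← mulVec_transpose, hS.eq, mulVec_nonsing_inv_mulVec hdet,
      dotProduct_comm]
  rw [mulVec_add, mulVec_smul, mulVec_nonsing_inv_mulVec hdet]
  simp only [add_dotProduct, dotProduct_add, smul_dotProduct, dotProduct_smul, hsymm,
    smul_eq_mul, dotProduct_comm μ]
  ring

variable {S : Matrix n n ℝ}

theorem PosDef.sq_mul_le_quadratic (hS : S.PosDef) (μ γ : n → ℝ) (c : ℝ) :
    c ^ 2 * (1 - μ ⬝ᵥ (S⁻¹ *ᵥ μ)) ≤ γ ⬝ᵥ (S *ᵥ γ) + 2 * c * (γ ⬝ᵥ μ) + c ^ 2 := by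
  rw [(isHermitian_iff_isSymm.1 hS.1).quadratic_eq_add_sq_mul hS.det_pos.ne'.isUnit]
  have hnonneg := hS.posSemidef.dotProduct_mulVec_nonneg (γ + c • S⁻¹ *ᵥ μ)
  simp only [star_trivial] at hnonneg
  linarith

theorem PosDef.quadratic_eq_sq_mul_of_mulVec_eq (hS : S.PosDef) {μ γ : n → ℝ} {c : ℝ}
    (hγ : S *ᵥ γ = -(c • μ)) :
    γ ⬝ᵥ (S *ᵥ γ) + 2 * c * (γ ⬝ᵥ μ) + c ^ 2 = c ^ 2 * (1 - μ ⬝ᵥ (S⁻¹ *ᵥ μ)) := by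
  have hdet := hS.det_pos.ne'.isUnit
  have hzero : S *ᵥ (γ + c • S⁻¹ *ᵥ μ) = 0 := by
    rw [mulVec_add, mulVec_smul, mulVec_nonsing_inv_mulVec hdet, hγ, neg_add_cancel]
  rw [(isHermitian_iff_isSymm.1 hS.1).quadratic_eq_add_sq_mul hdet, hzero, dotProduct_zero,
    zero_add]

end Matrix

section SecondMoments

variable {ι Ω : Type*} [Fintype ι] [MeasurableSpace Ω] {P : Measure Ω} {F : Ω → ι → ℝ}

theorem memLp_dotProduct (hF : ∀ i, MemLp (fun ω => F ω i) 2 P) (γ : ι → ℝ) :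
    MemLp (fun ω => γ ⬝ᵥ F ω) 2 P :=
  memLp_finsetSum _ fun i _ => (hF i).const_mul (γ i)

theorem integral_dotProduct (hF : ∀ i, Integrable (fun ω => F ω i) P) (γ : ι → ℝ) :
    ∫ ω, γ ⬝ᵥ F ω ∂P = γ ⬝ᵥ fun i => ∫ ω, F ω i ∂P := by
  simp only [dotProduct]
  rw [integral_finsetSum _ fun i _ => (hF i).const_mul (γ i)]
  simp only [integral_const_mul]

theorem integral_dotProduct_sq (hF : ∀ i, MemLp (fun ω => F ω i) 2 P) (γ : ι → ℝ) :
    ∫ ω, (γ ⬝ᵥ F ω) ^ 2 ∂P = γ ⬝ᵥ (of (fun i j => ∫ ω, F ω i * F ω j ∂P) *ᵥ γ) := by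
  have hrow : ∀ i, ∫ ω, F ω i * (γ ⬝ᵥ F ω) ∂P
      = (of (fun i j => ∫ ω, F ω i * F ω j ∂P) *ᵥ γ) i := fun i => by
    simp only [← smul_eq_mul (F _ i), ← dotProduct_smul]
    rw [integral_dotProduct (F := fun ω => F ω i • F ω)
      fun j => (hF i).integrable_mul (hF j), dotProduct_comm]
    rfl
  calc ∫ ω, (γ ⬝ᵥ F ω) ^ 2 ∂P = ∫ ω, γ ⬝ᵥ fun i => F ω i * (γ ⬝ᵥ F ω) ∂P := by
        simp only [sq, dotProduct, Finset.sum_mul, mul_assoc]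
    _ = _ := by
      rw [integral_dotProduct (F := fun ω i => F ω i * (γ ⬝ᵥ F ω))
        fun i => (hF i).integrable_mul (memLp_dotProduct hF γ), ← funext hrow]

theorem integral_dotProduct_add_const_sq [IsProbabilityMeasure P]
    (hF : ∀ i, MemLp (fun ω => F ω i) 2 P) (γ : ι → ℝ) (c : ℝ) :
    ∫ ω, (γ ⬝ᵥ F ω + c) ^ 2 ∂P =
      γ ⬝ᵥ (of (fun i j => ∫ ω, F ω i * F ω j ∂P) *ᵥ γ)
        + 2 * c * (γ ⬝ᵥ fun i => ∫ ω, F ω i ∂P) + c ^ 2 := by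
  have hsq : Integrable (fun ω => (γ ⬝ᵥ F ω) ^ 2) P := (memLp_dotProduct hF γ).integrable_sq
  have hlin : Integrable (fun ω => 2 * (γ ⬝ᵥ F ω) * c) P :=
    (((memLp_dotProduct hF γ).integrable one_le_two).const_mul 2).mul_const c
  have hquad : Integrable (fun ω => (γ ⬝ᵥ F ω) ^ 2 + 2 * (γ ⬝ᵥ F ω) * c) P := hsq.add hlin
  simp only [add_sq]
  rw [integral_add hquad (integrable_const _), integral_add hsq hlin,
    integral_mul_const, integral_const_mul, integral_dotProduct_sq hF,
    integral_dotProduct fun i => (hF i).integrable one_le_two, integral_const, probReal_univ,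
    one_smul]
  ring

theorem integral_sum_sq_mulVec_add {κ : Type*} [Fintype κ] [IsProbabilityMeasure P]
    (hF : ∀ i, MemLp (fun ω => F ω i) 2 P) (Γ : Matrix κ ι ℝ) (ζ : κ → ℝ) :
    ∫ ω, ∑ k, (Γ *ᵥ F ω + ζ) k ^ 2 ∂P =
      ∑ k, (Γ k ⬝ᵥ (of (fun i j => ∫ ω, F ω i * F ω j ∂P) *ᵥ Γ k)
        + 2 * ζ k * (Γ k ⬝ᵥ fun i => ∫ ω, F ω i ∂P) + ζ k ^ 2) := by
  rw [integral_finsetSum (f := fun k ω => (Γ *ᵥ F ω + ζ) k ^ 2) _ fun k _ =>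
    ((memLp_dotProduct hF (Γ k)).add (memLp_const (ζ k))).integrable_sq]
  exact Finset.sum_congr rfl fun k _ => integral_dotProduct_add_const_sq hF (Γ k) (ζ k)

end SecondMoments

theorem stmt2_general {K : ℕ} {Ω : Type*} [MeasurableSpace Ω] (P : Measure Ω)
    [IsProbabilityMeasure P]
    (F : Ω → Fin K → ℝ)
    (hL2 : ∀ i, MemLp (fun ω => F ω i) 2 P)
    (S : Matrix (Fin K) (Fin K) ℝ) (hS : ∀ i j, S i j = ∫ ω, F ω i * F ω j ∂P)
    (hSpd : S.PosDef)
    (μv : Fin K → ℝ) (hμ : ∀ i, μv i = ∫ ω, F ω i ∂P)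
    (ζ : Fin K → ℝ) :
    IsLeast {x : ℝ | ∃ Γ : Matrix (Fin K) (Fin K) ℝ,
        x = ∫ ω, ∑ i, (Γ *ᵥ F ω + ζ) i ^ 2 ∂P}
      ((∑ i, ζ i ^ 2) * (1 - μv ⬝ᵥ (S⁻¹ *ᵥ μv))) ∧
    ∀ Γ : Matrix (Fin K) (Fin K) ℝ,
      (∀ i, S *ᵥ (fun j => Γ i j) = fun j => -(ζ i * μv j)) →
      (∫ ω, ∑ i, (Γ *ᵥ F ω + ζ) i ^ 2 ∂P)
        = (∑ i, ζ i ^ 2) * (1 - μv ⬝ᵥ (S⁻¹ *ᵥ μv)) := by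
  have hrisk : ∀ Γ : Matrix (Fin K) (Fin K) ℝ, ∫ ω, ∑ i, (Γ *ᵥ F ω + ζ) i ^ 2 ∂P =
      ∑ i, (Γ i ⬝ᵥ (S *ᵥ Γ i) + 2 * ζ i * (Γ i ⬝ᵥ μv) + ζ i ^ 2) := fun Γ => by
    have hSm : S = of fun i j => ∫ ω, F ω i * F ω j ∂P := ext hS
    rw [integral_sum_sq_mulVec_add hL2, ← hSm, ← funext hμ]
  have hopt : ∀ Γ : Matrix (Fin K) (Fin K) ℝ,
      (∀ i, S *ᵥ (fun j => Γ i j) = fun j => -(ζ i * μv j)) →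
      (∫ ω, ∑ i, (Γ *ᵥ F ω + ζ) i ^ 2 ∂P)
        = (∑ i, ζ i ^ 2) * (1 - μv ⬝ᵥ (S⁻¹ *ᵥ μv)) := fun Γ hΓ => by
    rw [hrisk, Finset.sum_mul]
    exact Finset.sum_congr rfl fun i _ => hSpd.quadratic_eq_sq_mul_of_mulVec_eq (hΓ i)
  set Γ₀ : Matrix (Fin K) (Fin K) ℝ := -vecMulVec ζ (S⁻¹ *ᵥ μv)
  have hΓ₀ : ∀ i, S *ᵥ (fun j => Γ₀ i j) = fun j => -(ζ i * μv j) := fun i => by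
    have hrow : Γ₀ i = -(ζ i • S⁻¹ *ᵥ μv) := by ext j; simp [Γ₀, vecMulVec_apply]
    rw [hrow, mulVec_neg, mulVec_smul, mulVec_nonsing_inv_mulVec hSpd.det_pos.ne'.isUnit]
    rfl
  refine ⟨⟨⟨Γ₀, (hopt Γ₀ hΓ₀).symm⟩, ?_⟩, hopt⟩
  rintro _ ⟨Γ, rfl⟩
  rw [hrisk, Finset.sum_mul]
  exact Finset.sum_le_sum fun i _ => hSpd.sq_mul_le_quadratic μv (Γ i) (ζ i)

/-- Quadratic minimization: for a square-integrable random vector `F` with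
`S = E(FFᵀ)` positive definite and `μ = E F`, the infimum over matrices `Γ` of
`E‖ΓF + ζ‖₂²` equals `‖ζ‖₂² (1 − μᵀS⁻¹μ)`, attained at `Γ` with `S Γᵢᵀ = −ζᵢ μ`. -/
theorem stmt2 {K : ℕ} {Ω : Type*} [MeasurableSpace Ω] (P : Measure Ω)
    [IsProbabilityMeasure P]
    (F : Ω → Fin K → ℝ)
    (hmeas : ∀ i, Measurable fun ω => F ω i)
    (hL2 : ∀ i, MemLp (fun ω => F ω i) 2 P)
    (S : Matrix (Fin K) (Fin K) ℝ) (hS : ∀ i j, S i j = ∫ ω, F ω i * F ω j ∂P)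
    (hSpd : S.PosDef)
    (μv : Fin K → ℝ) (hμ : ∀ i, μv i = ∫ ω, F ω i ∂P)
    (ζ : Fin K → ℝ) :
    IsLeast {x : ℝ | ∃ Γ : Matrix (Fin K) (Fin K) ℝ,
        x = ∫ ω, ∑ i, (Γ *ᵥ F ω + ζ) i ^ 2 ∂P}
      ((∑ i, ζ i ^ 2) * (1 - μv ⬝ᵥ (S⁻¹ *ᵥ μv))) ∧
    ∀ Γ : Matrix (Fin K) (Fin K) ℝ,
      (∀ i, S *ᵥ (fun j => Γ i j) = fun j => -(ζ i * μv j)) →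
      (∫ ω, ∑ i, (Γ *ᵥ F ω + ζ) i ^ 2 ∂P)
        = (∑ i, ζ i ^ 2) * (1 - μv ⬝ᵥ (S⁻¹ *ᵥ μv)) :=
  stmt2_general P F hL2 S hS hSpd μv hμ ζ
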